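/- For upsets β ⊆ α and any single-conclusion argument ⟨Γ, φ⟩: if ⟨Γ, φ⟩ is α-preservation valid then it is β-preservation valid. Dually, for upsets α ⊆ β and any single-premise argument ⟨φ, Δ⟩: if ⟨φ, Δ⟩ is α-preservation valid then it is β-preservation valid. -/

import Mathlib

/-- Propositional formulas: atoms, negation, disjunction. -/
inductive Fml : Type
  | atom : ℕ → Fml
  | neg : Fml → Fml
  | or : Fml → Fml → Fml
deriving DecidableEq

namespace Fml

def and (φ ψ : Fml) : Fml := neg (or (neg φ) (neg ψ))

def bot : Fml := and (atom 0) (neg (atom 0))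

def imp (φ ψ : Fml) : Fml := or (neg φ) ψ

def eval (v : ℕ → Bool) : Fml → Bool
  | atom n => v n
  | neg φ => !(eval v φ)
  | or φ ψ => (eval v φ) || (eval v ψ)

end Fml

/-- Two formulas are jointly classically unsatisfiable. -/
def Incompatible (φ ψ : Fml) : Prop :=
  ∀ v : ℕ → Bool, ¬(φ.eval v = true ∧ ψ.eval v = true)

/-- Classical (Set-Set) validity. -/
def ClValid (Γ Δ : Finset Fml) : Prop :=
  ∀ v : ℕ → Bool, (∀ γ ∈ Γ, γ.eval v = true) → ∃ δ ∈ Δ, δ.eval v = true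

/-- Classical single-conclusion entailment. -/
def ClEntails (Γ : Finset Fml) (φ : Fml) : Prop :=
  ∀ v : ℕ → Bool, (∀ γ ∈ Γ, γ.eval v = true) → φ.eval v = true

def ClConsistent (Γ : Finset Fml) : Prop :=
  ∃ v : ℕ → Bool, ∀ γ ∈ Γ, γ.eval v = true

def Tautology (φ : Fml) : Prop := ∀ v : ℕ → Bool, φ.eval v = true

/-- A probability distribution on formulas. -/
structure ProbDist where
  p : Fml → ℝ
  nonneg : ∀ φ, 0 ≤ p φ
  le_one : ∀ φ, p φ ≤ 1
  bot_eq : p Fml.bot = 0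
  neg_eq : ∀ φ, p (Fml.neg φ) = 1 - p φ
  add_eq : ∀ φ ψ, Incompatible φ ψ → p (Fml.or φ ψ) = p φ + p ψ

/-- A probabilistic model: worlds with classical valuations and a finitely
additive probability measure on subsets of worlds. -/
structure PModel where
  W : Type
  nonempty : Nonempty W
  val : W → ℕ → Bool
  μ : Set W → ℝ
  nonneg : ∀ A : Set W, 0 ≤ μ A
  empty_eq : μ (∅ : Set W) = 0
  univ_eq : μ (Set.univ : Set W) = 1
  add_eq : ∀ A B : Set W, Disjoint A B → μ (A ∪ B) = μ A + μ B

/-- Denotation of a formula in a model. -/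
def PModel.den (M : PModel) (φ : Fml) : Set M.W := {w | φ.eval (M.val w) = true}

/-- Induced probability of a formula in a model. -/
def PModel.prob (M : PModel) (φ : Fml) : ℝ := M.μ (M.den φ)

/-- An upset of [0,1]: contains 1, excludes 0, upward closed within [0,1]. -/
def IsUpset (α : Set ℝ) : Prop :=
  α ⊆ Set.Icc 0 1 ∧ (1 : ℝ) ∈ α ∧ (0 : ℝ) ∉ α ∧
    ∀ x ∈ α, ∀ y ∈ Set.Icc (0:ℝ) 1, x ≤ y → y ∈ α

/-- The mirror image of α. -/
def mirror (α : Set ℝ) : Set ℝ := {x ∈ Set.Icc (0:ℝ) 1 | 1 - x ∈ α}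

/-- The dual of α. -/
def dual (α : Set ℝ) : Set ℝ := Set.Icc (0:ℝ) 1 \ mirror α

/-- Conjunction of a finite set of formulas. -/
noncomputable def conj (Γ : Finset Fml) : Fml := Γ.toList.foldr Fml.and (Fml.neg Fml.bot)

/-- Disjunction of a finite set of formulas. -/
noncomputable def disj (Δ : Finset Fml) : Fml := Δ.toList.foldr Fml.or Fml.bot

/-- Disjunction of a list of formulas. -/
def disjList (l : List Fml) : Fml := l.foldr Fml.or Fml.bot

/-- α-preservation validity (over probability distributions). -/
def PresValid (α : Set ℝ) (Γ Δ : Finset Fml) : Prop :=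
  ∀ P : ProbDist, (∀ γ ∈ Γ, P.p γ ∈ α) → ∃ δ ∈ Δ, P.p δ ∈ α

/-- α-preservation validity (over probabilistic models). -/
def PresValidM (α : Set ℝ) (Γ Δ : Finset Fml) : Prop :=
  ∀ M : PModel, (∀ γ ∈ Γ, M.prob γ ∈ α) → ∃ δ ∈ Δ, M.prob δ ∈ α

/-- α-symmetric validity. -/
def SymValid (α : Set ℝ) (Γ Δ : Finset Fml) : Prop :=
  ∀ P : ProbDist, (∀ γ ∈ Γ, P.p γ ∈ α) → ∃ δ ∈ Δ, P.p δ ∉ mirror α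

/-- α-satisfiability of a finite set of formulas. -/
def Satis (α : Set ℝ) (Γ : Finset Fml) : Prop :=
  ∃ P : ProbDist, ∀ γ ∈ Γ, P.p γ ∈ α

/-! Take a distribution `P` witnessing that `Γ ⊢ φ` is not `β`-valid. By `α`-validity
`P φ ∈ α \ β`, so `P φ` lies strictly below every `P γ`, and each premise is consistent with `¬φ`.
Mixing `P` with a distribution that vanishes at `φ` and is positive on every premise, with a
weight chosen from `sInf α`, moves `φ` out of `α` while keeping all premises in `α`.
The single-premise case is the mirror image under negation, which turns an upset into its dual
and reverses inclusions. -/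

namespace ProbDist

variable (P : ProbDist) {φ ψ : Fml}

lemma le_of_entails (h : ∀ v, φ.eval v = true → ψ.eval v = true) : P.p φ ≤ P.p ψ := by
  have hinc : Incompatible φ (Fml.neg ψ) := fun v ⟨hφ, hψ⟩ => by
    simp [Fml.eval, h v hφ] at hψ
  have := P.le_one (Fml.or φ (Fml.neg ψ))
  rw [P.add_eq _ _ hinc, P.neg_eq] at this
  linarith

lemma p_neg_bot : P.p (Fml.neg Fml.bot) = 1 := by
  rw [P.neg_eq, P.bot_eq, sub_zero]

def dirac (v : ℕ → Bool) : ProbDist where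
  p φ := if φ.eval v then 1 else 0
  nonneg φ := by split_ifs <;> norm_num
  le_one φ := by split_ifs <;> norm_num
  bot_eq := by simp [Fml.bot, Fml.and, Fml.eval]
  neg_eq φ := by cases h : φ.eval v <;> simp [Fml.eval, h]
  add_eq φ ψ hinc := by
    have := hinc v
    cases hφ : φ.eval v <;> cases hψ : ψ.eval v <;> simp_all [Fml.eval]

def mix (t : ℝ) (ht₀ : 0 ≤ t) (ht₁ : t ≤ 1) (P Q : ProbDist) : ProbDist where
  p φ := t * P.p φ + (1 - t) * Q.p φ
  nonneg φ := by nlinarith [P.nonneg φ, Q.nonneg φ]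
  le_one φ := by nlinarith [P.le_one φ, Q.le_one φ]
  bot_eq := by simp [P.bot_eq, Q.bot_eq]
  neg_eq φ := by rw [P.neg_eq, Q.neg_eq]; ring
  add_eq φ ψ h := by rw [P.add_eq _ _ h, Q.add_eq _ _ h]; ring

lemma exists_eq_zero_pos_of_lt (h : P.p φ < P.p ψ) :
    ∃ Q : ProbDist, Q.p φ = 0 ∧ 0 < Q.p ψ := by
  obtain ⟨v, hψ, hφ⟩ : ∃ v, ψ.eval v = true ∧ φ.eval v = false := by
    by_contra! hent
    exact (P.le_of_entails fun v hv => by simpa using hent v hv).not_gt h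
  exact ⟨dirac v, by simp [dirac, hφ], by simp [dirac, hψ]⟩

lemma exists_eq_zero_forall_pos {Γ : Finset Fml} (h₀ : ∃ Q : ProbDist, Q.p φ = 0)
    (h : ∀ γ ∈ Γ, ∃ Q : ProbDist, Q.p φ = 0 ∧ 0 < Q.p γ) :
    ∃ Q : ProbDist, Q.p φ = 0 ∧ ∀ γ ∈ Γ, 0 < Q.p γ := by
  classical
  induction Γ using Finset.induction_on with
  | empty => simpa using h₀
  | insert γ Γ _ ih =>
    obtain ⟨Q, hQφ, hQΓ⟩ := ih fun δ hδ => h δ (Finset.mem_insert_of_mem hδ)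
    obtain ⟨R, hRφ, hRγ⟩ := h γ (Finset.mem_insert_self γ Γ)
    refine ⟨mix (1 / 2) (by norm_num) (by norm_num) Q R, ?_, ?_⟩
    · simp [mix, hQφ, hRφ]
    · simp only [Finset.forall_mem_insert, mix]
      exact ⟨by nlinarith [Q.nonneg γ], fun δ hδ => by nlinarith [hQΓ δ hδ, R.nonneg δ]⟩

end ProbDist

namespace IsUpset

variable {α : Set ℝ}

lemma sInf_le (hα : IsUpset α) {x : ℝ} (hx : x ∈ α) : sInf α ≤ x :=
  csInf_le ⟨0, fun _ hy => (hα.1 hy).1⟩ hx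

lemma sInf_nonneg (hα : IsUpset α) : 0 ≤ sInf α :=
  le_csInf ⟨1, hα.2.1⟩ fun _ hy => (hα.1 hy).1

lemma notMem_of_lt_sInf (hα : IsUpset α) {x : ℝ} (hx : x < sInf α) : x ∉ α :=
  fun h => (hα.sInf_le h).not_gt hx

lemma mem_of_sInf_lt (hα : IsUpset α) {x : ℝ} (hx : x ∈ Set.Icc (0 : ℝ) 1) (h : sInf α < x) :
    x ∈ α := by
  obtain ⟨a, ha, hax⟩ := exists_lt_of_csInf_lt ⟨1, hα.2.1⟩ h
  exact hα.2.2.2 a ha x hx hax.le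

/-- The witness is `t = 0` if `sInf α = 0`, and `t = 2 sInf α / (p + m)` otherwise. -/
lemma exists_scale (hα : IsUpset α) {p m : ℝ} (hp : p ∈ α) (hpm : p < m) :
    ∃ t ∈ Set.Ico (0 : ℝ) 1, t * p ∉ α ∧ ∀ x ∈ Set.Icc (0 : ℝ) 1, t * m < x → x ∈ α := by
  have hp₀ : 0 < p := (hα.1 hp).1.lt_of_ne fun h => hα.2.2.1 (h ▸ hp)
  have hcp := hα.sInf_le hp
  rcases hα.sInf_nonneg.eq_or_lt with hc | hc
  · refine ⟨0, ⟨le_rfl, one_pos⟩, by simpa using hα.2.2.1, fun x hx hx₀ => ?_⟩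
    exact hα.mem_of_sInf_lt hx (by rw [← hc]; simpa using hx₀)
  · have hpm₀ : 0 < p + m := by linarith
    refine ⟨2 * sInf α / (p + m), ⟨by positivity, (div_lt_one hpm₀).2 (by linarith)⟩,
      hα.notMem_of_lt_sInf ?_, fun x hx hlt => hα.mem_of_sInf_lt hx (lt_of_le_of_lt ?_ hlt)⟩
    · rw [div_mul_eq_mul_div, div_lt_iff₀ hpm₀]; nlinarith
    · rw [div_mul_eq_mul_div, le_div_iff₀ hpm₀]; nlinarith

lemma dual (hα : IsUpset α) : IsUpset (dual α) := by
  refine ⟨Set.sdiff_subset, ⟨⟨zero_le_one, le_rfl⟩, fun h => hα.2.2.1 (by simpa using h.2)⟩,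
    fun h => h.2 ⟨⟨le_rfl, zero_le_one⟩, by simpa using hα.2.1⟩, ?_⟩
  rintro x ⟨hx, hxm⟩ y hy hxy
  refine ⟨hy, fun ⟨_, hyα⟩ => hxm ?_⟩
  exact ⟨hx, hα.2.2.2 _ hyα _ ⟨by linarith [hy.2], by linarith [hx.1]⟩ (by linarith)⟩

end IsUpset

lemma dual_anti {α β : Set ℝ} (h : α ⊆ β) : dual β ⊆ dual α :=
  Set.sdiff_subset_sdiff_right fun _ hx => ⟨hx.1, h hx.2⟩

lemma ProbDist.p_neg_mem_dual_iff (P : ProbDist) (α : Set ℝ) (φ : Fml) :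
    P.p (Fml.neg φ) ∈ dual α ↔ P.p φ ∉ α := by
  have h₀ := P.nonneg φ
  have h₁ := P.le_one φ
  simp [dual, mirror, P.neg_eq, h₀, h₁]

theorem presValid_singleton_right_of_subset {α β : Set ℝ} (hα : IsUpset α) (hβ : IsUpset β)
    (hβα : β ⊆ α) {Γ : Finset Fml} {φ : Fml} (h : PresValid α Γ {φ}) : PresValid β Γ {φ} := by
  simp only [PresValid, Finset.mem_singleton, exists_eq_left] at h ⊢
  intro P hΓ
  by_contra hφβ
  have hφα : P.p φ ∈ α := h P fun γ hγ => hβα (hΓ γ hγ)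
  have hlt : ∀ γ ∈ Γ, P.p φ < P.p γ := fun γ hγ => lt_of_not_ge fun hle =>
    hφβ (hβ.2.2.2 _ (hΓ γ hγ) _ ⟨P.nonneg φ, P.le_one φ⟩ hle)
  obtain ⟨m, hφm, hmΓ⟩ : ∃ m, P.p φ < m ∧ ∀ γ ∈ Γ, m < P.p γ :=
    (eventually_mem_nhdsWithin (s := Set.Ioi (P.p φ)) |>.and <|
      (Filter.eventually_all_finset Γ).2 fun γ hγ =>
        nhdsWithin_le_nhds (eventually_lt_nhds (hlt γ hγ))).exists
  -- `φ` is not a tautology: compare it with `¬⊥`, which has probability one.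
  have hφ₁ : P.p φ < P.p (Fml.neg Fml.bot) :=
    P.p_neg_bot ▸ (P.le_one φ).lt_of_ne fun h₁ => hφβ (h₁ ▸ hβ.2.1)
  obtain ⟨Q, hQφ, hQΓ⟩ := ProbDist.exists_eq_zero_forall_pos
    ((P.exists_eq_zero_pos_of_lt hφ₁).imp fun _ => And.left)
    fun γ hγ => P.exists_eq_zero_pos_of_lt (hlt γ hγ)
  obtain ⟨t, ⟨ht₀, ht₁⟩, htφ, htΓ⟩ := hα.exists_scale hφα hφm
  let R := ProbDist.mix t ht₀ ht₁.le P Q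
  have hRφ : R.p φ = t * P.p φ := by simp [R, ProbDist.mix, hQφ]
  refine htφ (hRφ ▸ h R fun γ hγ => htΓ _ ⟨R.nonneg γ, R.le_one γ⟩ ?_)
  show t * m < t * P.p γ + (1 - t) * Q.p γ
  nlinarith [hmΓ γ hγ, hQΓ γ hγ]

lemma presValid_singleton_left_iff (α : Set ℝ) (φ : Fml) (Δ : Finset Fml) :
    PresValid α {φ} Δ ↔ PresValid (dual α) (Δ.image Fml.neg) {Fml.neg φ} := by
  simp only [PresValid, Finset.mem_singleton, forall_eq, exists_eq_left,
    Finset.forall_mem_image, ProbDist.p_neg_mem_dual_iff]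
  exact forall_congr' fun P => by rw [← not_imp_not, not_exists]; simp only [not_and]

theorem presValid_singleton_left_of_subset {α β : Set ℝ} (hα : IsUpset α) (hβ : IsUpset β)
    (hαβ : α ⊆ β) {φ : Fml} {Δ : Finset Fml} (h : PresValid α {φ} Δ) : PresValid β {φ} Δ :=
  (presValid_singleton_left_iff β φ Δ).2 <| presValid_singleton_right_of_subset hα.dual hβ.dual
    (dual_anti hαβ) ((presValid_singleton_left_iff α φ Δ).1 h)

/-- narrowing the upset preserves Set-Fmla preservation validity;
widening the upset preserves Fmla-Set preservation validity. -/
theorem stmt9 :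
    (∀ α β : Set ℝ, IsUpset α → IsUpset β → β ⊆ α →
      ∀ (Γ : Finset Fml) (φ : Fml), PresValid α Γ {φ} → PresValid β Γ {φ}) ∧
    (∀ α β : Set ℝ, IsUpset α → IsUpset β → α ⊆ β →
      ∀ (φ : Fml) (Δ : Finset Fml), PresValid α {φ} Δ → PresValid β {φ} Δ) :=
  ⟨fun _ _ hα hβ h _ _ => presValid_singleton_right_of_subset hα hβ h,
    fun _ _ hα hβ h _ _ => presValid_singleton_left_of_subset hα hβ h⟩
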